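/- Let γ, ϱ < ω₁ with ϱ ≥ 1 and let n ∈ ℕ. Let E_1 < E_2 < ⋯ be finite subsets of ℕ with E_i ∈ A_n[S_γ] and every element of E_i at least i, and let K ⊆ ℕ be infinite. Then there exists an infinite L ⊆ K such that for every infinite M ⊆ L, { ⋃_{j∈F} E_{M(j)} : F ∈ S_ϱ } ⊆ S_{γ+ϱ}. -/

import Mathlib

noncomputable section

open Filter Set

namespace SchreierPaper

/-- `ω₁`, the first uncountable ordinal. -/
def omega1 : Ordinal := (Cardinal.aleph 1).ord

/-- `E < F` for finite sets of naturals: every element of `E` is smaller than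
every element of `F` (this agrees with `max E < min F` under the conventions
`max ∅ = 0`, `min ∅ = ∞`). -/
def BlockLt (E F : Finset ℕ) : Prop := ∀ i ∈ E, ∀ j ∈ F, i < j

/-- A Schreier system: the hierarchy of Schreier families `S ξ` of finite sets of
positive integers, together with the fixed choice `limSeq` of cofinal sequences at
countable limit ordinals used in the recursive definition. -/
structure SchreierSystem where
  S : Ordinal → Set (Finset ℕ)
  limSeq : Ordinal → ℕ → Ordinal
  zero_def : S 0 = {E : Finset ℕ | E = ∅ ∨ ∃ n : ℕ, 0 < n ∧ E = {n}}
  succ_def : ∀ ξ : Ordinal,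
    S (ξ + 1) = {E : Finset ℕ | E = ∅ ∨ ∃ (k : ℕ) (Es : Fin k → Finset ℕ), 0 < k ∧
      (∀ i, (Es i).Nonempty ∧ Es i ∈ S ξ) ∧
      (∀ i j : Fin k, i < j → BlockLt (Es i) (Es j)) ∧
      (∀ m ∈ E, k ≤ m) ∧ E = Finset.univ.biUnion Es}
  limSeq_lt : ∀ ξ : Ordinal, ξ < omega1 → Order.IsSuccLimit ξ → ∀ n : ℕ, limSeq ξ n < ξ
  limSeq_strictMono : ∀ ξ : Ordinal, ξ < omega1 → Order.IsSuccLimit ξ → StrictMono (limSeq ξ)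
  limSeq_cofinal : ∀ ξ : Ordinal, ξ < omega1 → Order.IsSuccLimit ξ → ∀ β < ξ, ∃ n : ℕ, β ≤ limSeq ξ n
  limSeq_nested : ∀ ξ : Ordinal, ξ < omega1 → Order.IsSuccLimit ξ →
    ∀ n : ℕ, S (limSeq ξ n + 1) ⊆ S (limSeq ξ (n + 1))
  lim_def : ∀ ξ : Ordinal, ξ < omega1 → Order.IsSuccLimit ξ →
    S ξ = {E : Finset ℕ | E = ∅ ∨ (E.Nonempty ∧ ∃ n : ℕ, (∀ m ∈ E, n ≤ m) ∧
      E ∈ S (limSeq ξ n + 1))}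

/-- The Schreier norm `‖x‖_ξ` of a finitely supported sequence. -/
def schreierNorm (SS : SchreierSystem) (ξ : Ordinal) (x : ℕ →₀ ℝ) : ℝ :=
  sSup {c : ℝ | ∃ E ∈ SS.S ξ, c = ∑ i ∈ E, |x i|}

/-- The action of a finitely supported functional (coefficients with respect to the
coordinate functionals) on a finitely supported vector. -/
def pairing (g x : ℕ →₀ ℝ) : ℝ := g.sum fun j c => c * x j

/-- The dual norm of `X_ξ^*` on finitely supported functionals. -/
def dualNorm (SS : SchreierSystem) (ξ : Ordinal) (g : ℕ →₀ ℝ) : ℝ :=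
  sSup {c : ℝ | ∃ x : ℕ →₀ ℝ, schreierNorm SS ξ x ≤ 1 ∧ c = |pairing g x|}

/-- The canonical unit vector `e_n` (also used for the coordinate functional `f_n`). -/
def unitVec (n : ℕ) : ℕ →₀ ℝ := Finsupp.single n 1

/-- A block sequence: nonzero, finitely supported, supported on positive integers,
with successive supports. -/
def IsBlockSeq (x : ℕ → ℕ →₀ ℝ) : Prop :=
  (∀ i, x i ≠ 0) ∧ (∀ i, ∀ a ∈ (x i).support, 0 < a) ∧
    ∀ i, BlockLt (x i).support (x (i + 1)).support

/-- A normalized block sequence in the Schreier space `X_ξ`. -/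
def IsNormalizedBlockSeq (SS : SchreierSystem) (ξ : Ordinal) (x : ℕ → ℕ →₀ ℝ) : Prop :=
  IsBlockSeq x ∧ ∀ i, schreierNorm SS ξ (x i) = 1

/-- A normalized block sequence in the dual space `X_ξ^*`. -/
def IsNormalizedDualBlockSeq (SS : SchreierSystem) (ξ : Ordinal) (x : ℕ → ℕ →₀ ℝ) : Prop :=
  IsBlockSeq x ∧ ∀ i, dualNorm SS ξ (x i) = 1

/-- The linear combination `∑ a_i u_i` for finitely supported scalars `a`. -/
def combo (u : ℕ → ℕ →₀ ℝ) (a : ℕ →₀ ℝ) : ℕ →₀ ℝ := a.sum fun i c => c • u i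

/-- Equivalence of two sequences with respect to two (norm) functions. -/
def SeqEquiv (N₁ : (ℕ →₀ ℝ) → ℝ) (u : ℕ → ℕ →₀ ℝ)
    (N₂ : (ℕ →₀ ℝ) → ℝ) (v : ℕ → ℕ →₀ ℝ) : Prop :=
  ∃ C : ℝ, 1 ≤ C ∧ ∀ a : ℕ →₀ ℝ,
    C⁻¹ * N₂ (combo v a) ≤ N₁ (combo u a) ∧ N₁ (combo u a) ≤ C * N₂ (combo v a)

/-- A `ϱ`-Schreier pair `((x_i), (x*_i))` in `X_ξ × X_ξ^*`. -/
def IsSchreierPair (SS : SchreierSystem) (ξ ϱ : Ordinal) (x xs : ℕ → ℕ →₀ ℝ) : Prop :=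
  IsNormalizedBlockSeq SS ξ x ∧ IsNormalizedDualBlockSeq SS ξ xs ∧
  (∀ i j, i ≠ j → pairing (xs i) (x j) = 0) ∧
  (∀ i, pairing (xs i) (x i) = ∑ j ∈ (xs i).support, |xs i j| * |x i j|) ∧
  (∃ δ : ℝ, 0 < δ ∧ ∀ i, δ ≤ pairing (xs i) (x i)) ∧
  (∃ J : ℕ → ℕ, StrictMono J ∧ (∀ i, 0 < J i) ∧
    SeqEquiv (schreierNorm SS ξ) x (schreierNorm SS ϱ) (fun i => unitVec (J i)) ∧
    SeqEquiv (dualNorm SS ξ) xs (dualNorm SS ϱ) (fun i => unitVec (J i))) ∧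
  (∃ C : ℝ, ∀ n : ℕ, ∀ y : ℕ →₀ ℝ,
    schreierNorm SS ξ (∑ i ∈ Finset.range n, pairing (xs i) y • x i) ≤ C * schreierNorm SS ξ y)

/-- `I(ξ)`: the set of partial sums of the Cantor normal form of `ξ`, characterized as
the ordinals `ι ≤ ξ` that are minimal among the ordinals `ι'` with `ι' + (ξ - ι) = ξ`. -/
def IOrd (ξ : Ordinal) : Set Ordinal :=
  {ι | ι ≤ ξ ∧ ∀ ι' : Ordinal, ι' + (ξ - ι) = ξ → ι ≤ ι'}

/-- `R(ξ) = {ξ - ι : ι ≤ ξ}`: the set of ordinals `ϱ` such that `ι + ϱ = ξ` for some `ι`. -/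
def ROrd (ξ : Ordinal) : Set Ordinal := {ϱ | ∃ ι : Ordinal, ι + ϱ = ξ}

/-- The family `A_n[S_γ]` of unions of at most `n` successive members of `S γ`. -/
def AnS (SS : SchreierSystem) (n : ℕ) (γ : Ordinal) : Set (Finset ℕ) :=
  {E : Finset ℕ | E = ∅ ∨ ∃ (k : ℕ) (Es : Fin k → Finset ℕ), 0 < k ∧ k ≤ n ∧
    (∀ i, (Es i).Nonempty ∧ Es i ∈ SS.S γ) ∧
    (∀ i j : Fin k, i < j → BlockLt (Es i) (Es j)) ∧ E = Finset.univ.biUnion Es}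

/-- The `⊆`-maximal members of a family of finite sets. -/
def MAXf (F : Set (Finset ℕ)) : Set (Finset ℕ) := {E | E ∈ F ∧ ∀ G ∈ F, E ⊆ G → E = G}

/-- `T_ε x*`: the part of a functional with coefficients of absolute value `> ε`. -/
def Ttrunc (ε : ℝ) (g : ℕ →₀ ℝ) : ℕ →₀ ℝ :=
  haveI := Classical.decPred fun j : ℕ => ε < |g j|
  g.filter fun j => ε < |g j|

/-- `R_ε x*`: the part of a functional with coefficients of absolute value `≤ ε`. -/
def Rtrunc (ε : ℝ) (g : ℕ →₀ ℝ) : ℕ →₀ ℝ :=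
  haveI := Classical.decPred fun j : ℕ => |g j| ≤ ε
  g.filter fun j => |g j| ≤ ε

/-- A `ξ`-flat block sequence of functionals:
`inf_{ε>0} limsup_i ‖R_ε y*_i‖ > 0`. -/
def XiFlat (SS : SchreierSystem) (ξ : Ordinal) (y : ℕ → ℕ →₀ ℝ) : Prop :=
  ∃ δ : ℝ, 0 < δ ∧ ∀ ε : ℝ, 0 < ε →
    δ ≤ Filter.limsup (fun i => dualNorm SS ξ (Rtrunc ε (y i))) Filter.atTop

/-- An `ι`-approachable block sequence of functionals. -/
def Approachable (SS : SchreierSystem) (ι : Ordinal) (y : ℕ → ℕ →₀ ℝ) : Prop :=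
  ∃ ϑ : ℝ, 0 < ϑ ∧ ∀ β < ι, ∀ n j : ℕ, ∃ i > j,
    (Ttrunc ϑ (y i)).support ∉ (AnS SS n β \ MAXf (AnS SS n β))

/-- Auxiliary recursion: given the "first average" operation `G` on infinite sets,
produce the sequence of successive averages, each taken on the set with all the
previous supports removed. -/
def iterAvg (G : Set ℕ → (ℕ →₀ ℝ)) (M : Set ℕ) : ℕ → (ℕ →₀ ℝ) := fun n =>
  Nat.strongRecOn n fun n prev =>
    G (M \ ⋃ (i : ℕ) (h : i < n), ((prev i h).support : Set ℕ))

/-- The repeated averages hierarchy `𝕊^ξ_{M,n}` (with `n` running from `0`). -/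
def RA (SS : SchreierSystem) (ξ : Ordinal) : Set ℕ → ℕ → (ℕ →₀ ℝ) :=
  Ordinal.limitRecOn (motive := fun _ => Set ℕ → ℕ → (ℕ →₀ ℝ)) ξ
    (fun M n => Finsupp.single (Nat.nth (· ∈ M) n) (1 : ℝ))
    (fun _ ih M => iterAvg
      (fun N => ((sInf N : ℕ) : ℝ)⁻¹ • ∑ j ∈ Finset.range (sInf N), ih N j) M)
    (fun ξ _ ih M => iterAvg
      (fun N => if h : SS.limSeq ξ (sInf N) + 1 < ξ then ih _ h N 0 else 0) M)

/-- The modified Schreier families `S^M_ξ`, defined with the same fixed cofinal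
sequences as the given Schreier system. -/
def SMod (SS : SchreierSystem) (ξ : Ordinal) : Set (Finset ℕ) :=
  Ordinal.limitRecOn (motive := fun _ => Set (Finset ℕ)) ξ
    {E : Finset ℕ | E = ∅ ∨ ∃ n : ℕ, 0 < n ∧ E = {n}}
    (fun _ ih => {E : Finset ℕ | E = ∅ ∨ ∃ (k : ℕ) (Es : Fin k → Finset ℕ), 0 < k ∧
      (∀ i, (Es i).Nonempty ∧ Es i ∈ ih ∧ ∀ m ∈ Es i, k ≤ m) ∧
      (∀ i j : Fin k, i ≠ j → Disjoint (Es i) (Es j)) ∧ E = Finset.univ.biUnion Es})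
    (fun ξ _ ih => {E : Finset ℕ | E = ∅ ∨ (E.Nonempty ∧ ∃ n : ℕ, (∀ m ∈ E, n ≤ m) ∧
      ∃ h : SS.limSeq ξ n + 1 < ξ, E ∈ ih _ h)})

/-- `τ_ξ(A)`: the least number of successive members of `S ξ` whose union is `A`. -/
def tau (SS : SchreierSystem) (ξ : Ordinal) (A : Finset ℕ) : ℕ :=
  sInf {k : ℕ | ∃ Fs : Fin k → Finset ℕ, (∀ i, Fs i ∈ SS.S ξ) ∧
    (∀ i j : Fin k, i < j → BlockLt (Fs i) (Fs j)) ∧ A = Finset.univ.biUnion Fs}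

/-- A map `ψ` defined on an infinite set `L` is `ξ`-injective if
`sup_{F ∈ S ξ} τ_ξ(ψ⁻¹(F)) < ∞` (in particular all these preimages are finite). -/
def XiInjective (SS : SchreierSystem) (ξ : Ordinal) (L : Set ℕ) (ψ : ℕ → ℕ) : Prop :=
  ∃ C : ℕ, ∀ F ∈ SS.S ξ, ∃ A : Finset ℕ, (↑A = {x ∈ L | ψ x ∈ F}) ∧ tau SS ξ A ≤ C

/-- The sum of the indicator functionals of a finite set. -/
def indicatorFs (s : Finset ℕ) : ℕ →₀ ℝ := ∑ j ∈ s, Finsupp.single j 1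

section Operators

variable {X Y : Type*} [NormedAddCommGroup X] [NormedSpace ℝ X]
  [NormedAddCommGroup Y] [NormedSpace ℝ Y]

/-- A strictly singular operator. -/
def StrictlySingular (T : X →L[ℝ] Y) : Prop :=
  ∀ ε : ℝ, 0 < ε → ∀ Z : Submodule ℝ X, ¬ FiniteDimensional ℝ Z →
    ∃ x ∈ Z, ‖x‖ = 1 ∧ ‖T x‖ < ε

/-- A basic sequence in a normed space. -/
def IsBasicSeq (x : ℕ → X) : Prop :=
  (∀ i, x i ≠ 0) ∧ ∃ K : ℝ, ∀ m n : ℕ, m ≤ n → ∀ a : ℕ → ℝ,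
    ‖∑ i ∈ Finset.range m, a i • x i‖ ≤ K * ‖∑ i ∈ Finset.range n, a i • x i‖

/-- An `S_ϱ`-strictly singular operator. -/
def SSsingular (SS : SchreierSystem) (ϱ : Ordinal) (T : X →L[ℝ] Y) : Prop :=
  ∀ ε : ℝ, 0 < ε → ∀ x : ℕ → X, IsBasicSeq x →
    ∃ F ∈ SS.S ϱ, ∃ v ∈ Submodule.span ℝ {w : X | ∃ i ∈ F, w = x i},
      ‖v‖ = 1 ∧ ‖T v‖ < ε

/-- A compact operator: the image of the unit ball is relatively compact. -/
def CompactOp (T : X →L[ℝ] Y) : Prop :=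
  IsCompact (closure (⇑T '' Metric.closedBall 0 1))

/-- A finitely strictly singular operator. -/
def FinitelyStrictlySingular (T : X →L[ℝ] Y) : Prop :=
  ∀ ε : ℝ, 0 < ε → ∃ n : ℕ, ∀ E : Submodule ℝ X, FiniteDimensional ℝ E →
    Module.finrank ℝ E = n → ∃ x ∈ E, ‖x‖ = 1 ∧ ‖T x‖ < ε

/-- A closed operator ideal on a Banach space: a norm-closed linear subspace of the
bounded operators, stable under two-sided composition with bounded operators. -/
def IsClosedOperatorIdeal (I : Set (X →L[ℝ] X)) : Prop :=
  IsClosed I ∧ (0 : X →L[ℝ] X) ∈ I ∧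
  (∀ S T : X →L[ℝ] X, S ∈ I → T ∈ I → S + T ∈ I) ∧
  (∀ (c : ℝ) (T : X →L[ℝ] X), T ∈ I → c • T ∈ I) ∧
  (∀ A B : X →L[ℝ] X, ∀ T ∈ I, A.comp (T.comp B) ∈ I)

end Operators


/-! ### Auxiliary development -/

def unionL (l : List (Finset ℕ)) : Finset ℕ := l.foldr (· ∪ ·) ∅

@[simp] lemma unionL_nil : unionL [] = ∅ := rfl

@[simp] lemma unionL_cons (a : Finset ℕ) (t : List (Finset ℕ)) :
    unionL (a :: t) = a ∪ unionL t := rfl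

lemma mem_unionL {l : List (Finset ℕ)} {x : ℕ} : x ∈ unionL l ↔ ∃ B ∈ l, x ∈ B := by
  induction l with
  | nil => simp
  | cons a t ih => simp [ih]

lemma unionL_append (l₁ l₂ : List (Finset ℕ)) :
    unionL (l₁ ++ l₂) = unionL l₁ ∪ unionL l₂ := by
  induction l₁ with
  | nil => simp
  | cons a t ih => simp [ih, Finset.union_assoc]

lemma card_unionL_le (l : List (Finset ℕ)) :
    (unionL l).card ≤ (l.map Finset.card).sum := by
  induction l with
  | nil => simp
  | cons a t ih =>
    simp only [unionL_cons, List.map_cons, List.sum_cons]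
    exact le_trans (Finset.card_union_le _ _) (Nat.add_le_add_left ih _)

lemma mem_S_succ_iff (SS : SchreierSystem) (ξ : Ordinal) (A : Finset ℕ) :
    A ∈ SS.S (ξ + 1) ↔ A = ∅ ∨ ∃ l : List (Finset ℕ),
      (∀ B ∈ l, B.Nonempty ∧ B ∈ SS.S ξ) ∧ l.Pairwise BlockLt ∧
      (∀ m ∈ A, l.length ≤ m) ∧ A = unionL l ∧ l ≠ [] := by
  rw [SS.succ_def ξ]
  simp only [Set.mem_setOf_eq]
  constructor
  · rintro (h | ⟨k, Es, hk, hblocks, hord, hmin, rfl⟩)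
    · exact Or.inl h
    · refine Or.inr ⟨List.ofFn Es, ?_, ?_, ?_, ?_, ?_⟩
      · intro B hB
        obtain ⟨i, rfl⟩ := (List.mem_ofFn (f := Es) (a := B)).1 hB
        exact hblocks i
      · rw [List.pairwise_iff_get]
        intro i j hij
        rw [List.get_ofFn, List.get_ofFn]
        apply hord
        simp only [Fin.lt_def, Fin.coe_cast]
        exact hij
      · intro m hm
        rw [List.length_ofFn]
        exact hmin m hm
      · ext x
        simp only [Finset.mem_biUnion, Finset.mem_univ, true_and, mem_unionL]
        constructor
        · rintro ⟨i, hx⟩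
          exact ⟨Es i, (List.mem_ofFn (f := Es)).2 ⟨i, rfl⟩, hx⟩
        · rintro ⟨B, hB, hx⟩
          obtain ⟨i, rfl⟩ := (List.mem_ofFn (f := Es) (a := B)).1 hB
          exact ⟨i, hx⟩
      · intro h
        have : k = 0 := by simpa using congrArg List.length h
        omega
  · rintro (h | ⟨l, hblocks, hord, hmin, rfl, hne⟩)
    · exact Or.inl h
    · refine Or.inr ⟨l.length, l.get, List.length_pos_iff.2 hne,
        fun i => hblocks _ (l.get_mem i), ?_, hmin, ?_⟩
      · intro i j hij
        exact List.pairwise_iff_get.1 hord i j hij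
      · ext x
        simp only [Finset.mem_biUnion, Finset.mem_univ, true_and, mem_unionL]
        constructor
        · rintro ⟨B, hB, hx⟩
          obtain ⟨i, rfl⟩ := List.mem_iff_get.1 hB
          exact ⟨i, hx⟩
        · rintro ⟨i, hx⟩
          exact ⟨l.get i, l.get_mem i, hx⟩

lemma AnS_list {SS : SchreierSystem} {n : ℕ} {γ : Ordinal} {A : Finset ℕ}
    (hA : A ∈ AnS SS n γ) :
    A = ∅ ∨ ∃ l : List (Finset ℕ), l.length ≤ n ∧
      (∀ B ∈ l, B.Nonempty ∧ B ∈ SS.S γ) ∧ l.Pairwise BlockLt ∧ A = unionL l := by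
  rcases hA with h | ⟨k, Es, hk, hkn, hblocks, hord, rfl⟩
  · exact Or.inl h
  · refine Or.inr ⟨List.ofFn Es, by rw [List.length_ofFn]; exact hkn, ?_, ?_, ?_⟩
    · intro B hB
      obtain ⟨i, rfl⟩ := (List.mem_ofFn (f := Es) (a := B)).1 hB
      exact hblocks i
    · rw [List.pairwise_iff_get]
      intro i j hij
      rw [List.get_ofFn, List.get_ofFn]
      apply hord
      simp only [Fin.lt_def, Fin.coe_cast]
      exact hij
    · ext x
      simp only [Finset.mem_biUnion, Finset.mem_univ, true_and, mem_unionL]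
      constructor
      · rintro ⟨i, hx⟩
        exact ⟨Es i, (List.mem_ofFn (f := Es)).2 ⟨i, rfl⟩, hx⟩
      · rintro ⟨B, hB, hx⟩
        obtain ⟨i, rfl⟩ := (List.mem_ofFn (f := Es) (a := B)).1 hB
        exact ⟨i, hx⟩

lemma add_lt_omega1 {a b : Ordinal} (ha : a < omega1) (hb : b < omega1) :
    a + b < omega1 := by
  rw [omega1, Cardinal.lt_ord] at *
  rw [Ordinal.card_add]
  exact Cardinal.add_lt_of_lt (Cardinal.aleph0_le_aleph 1) ha hb

lemma one_lt_omega1 : (1 : Ordinal) < omega1 := by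
  rw [omega1, Cardinal.lt_ord, Ordinal.card_one]
  exact lt_of_lt_of_le Cardinal.one_lt_aleph0 (Cardinal.aleph0_le_aleph 1)

lemma S_empty (SS : SchreierSystem) (ξ : Ordinal) (hξ : ξ < omega1) : ∅ ∈ SS.S ξ := by
  rcases Ordinal.zero_or_succ_or_isSuccLimit ξ with rfl | ⟨ζ, rfl⟩ | hlim
  · rw [SS.zero_def]; exact Or.inl rfl
  · rw [← Ordinal.add_one_eq_succ, SS.succ_def]; exact Or.inl rfl
  · rw [SS.lim_def ξ hξ hlim]; exact Or.inl rfl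

lemma S_pos (SS : SchreierSystem) : ∀ ξ : Ordinal, ξ < omega1 →
    ∀ A ∈ SS.S ξ, ∀ x ∈ A, 0 < x := by
  intro ξ
  induction ξ using Ordinal.induction with
  | h ξ IH =>
    intro hξ A hA x hx
    rcases Ordinal.zero_or_succ_or_isSuccLimit ξ with rfl | ⟨ζ, rfl⟩ | hlim
    · rw [SS.zero_def] at hA
      rcases hA with rfl | ⟨m, hm, rfl⟩
      · simp at hx
      · simp only [Finset.mem_singleton] at hx
        omega
    · rw [← Ordinal.add_one_eq_succ] at hξ hA
      rw [mem_S_succ_iff] at hA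
      rcases hA with rfl | ⟨l, hbl, -, -, rfl, -⟩
      · simp at hx
      · obtain ⟨B, hB, hxB⟩ := mem_unionL.1 hx
        have hζξ : ζ < ζ + 1 := by
          rw [Ordinal.add_one_eq_succ]; exact Order.lt_succ ζ
        exact IH ζ (Order.lt_succ ζ) (lt_of_lt_of_le hζξ hξ.le) B (hbl B hB).2 x hxB
    · rw [SS.lim_def ξ hξ hlim] at hA
      rcases hA with rfl | ⟨-, m, -, hA⟩
      · simp at hx
      · have h1 : SS.limSeq ξ m + 1 < ξ := by
          rw [Ordinal.add_one_eq_succ]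
          exact hlim.succ_lt (SS.limSeq_lt ξ hξ hlim m)
        exact IH _ h1 (h1.trans hξ) A hA x hx

lemma S_up (SS : SchreierSystem) {ξ : Ordinal} {A : Finset ℕ}
    (hA : A ∈ SS.S ξ) (hpos : ∀ x ∈ A, 0 < x) : A ∈ SS.S (ξ + 1) := by
  rw [mem_S_succ_iff]
  rcases eq_or_ne A ∅ with rfl | hne
  · exact Or.inl rfl
  · refine Or.inr ⟨[A], ?_, ?_, ?_, ?_, ?_⟩
    · intro B hB
      simp only [List.mem_singleton] at hB
      subst hB
      exact ⟨Finset.nonempty_iff_ne_empty.2 hne, hA⟩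
    · simp
    · intro m hm
      exact hpos m hm
    · simp
    · simp

lemma S_hereditary (SS : SchreierSystem) : ∀ ξ : Ordinal, ξ < omega1 →
    ∀ A ∈ SS.S ξ, ∀ B ⊆ A, B ∈ SS.S ξ := by
  intro ξ
  induction ξ using Ordinal.induction with
  | h ξ IH =>
    intro hξ A hA B hBA
    rcases eq_or_ne B ∅ with rfl | hBne
    · exact S_empty SS ξ hξ
    rcases Ordinal.zero_or_succ_or_isSuccLimit ξ with rfl | ⟨ζ, rfl⟩ | hlim
    · rw [SS.zero_def] at hA ⊢
      rcases hA with rfl | ⟨m, hm, rfl⟩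
      · exact absurd (Finset.subset_empty.1 hBA) hBne
      · rcases Finset.subset_singleton_iff.1 hBA with rfl | rfl
        · exact absurd rfl hBne
        · exact Or.inr ⟨m, hm, rfl⟩
    · rw [← Ordinal.add_one_eq_succ] at hξ hA ⊢
      have hζξ : ζ < ζ + 1 := by rw [Ordinal.add_one_eq_succ]; exact Order.lt_succ ζ
      rw [mem_S_succ_iff] at hA ⊢
      rcases hA with rfl | ⟨l, hbl, hord, hmin, rfl, -⟩
      · exact absurd (Finset.subset_empty.1 hBA) hBne
      · refine Or.inr ⟨(l.map (· ∩ B)).filter (fun C => decide (C ≠ ∅)), ?_, ?_, ?_, ?_, ?_⟩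
        · intro C hC
          rw [List.mem_filter] at hC
          obtain ⟨hC1, hC2⟩ := hC
          obtain ⟨D, hD, rfl⟩ := List.mem_map.1 hC1
          rw [decide_eq_true_eq] at hC2
          exact ⟨Finset.nonempty_iff_ne_empty.2 hC2,
            IH ζ (Order.lt_succ ζ) (hζξ.trans hξ) D (hbl D hD).2 _ Finset.inter_subset_left⟩
        · refine List.Pairwise.filter _ ?_
          refine hord.map _ ?_
          intro C D hCD x hx y hy
          exact hCD x (Finset.mem_of_mem_inter_left hx) y (Finset.mem_of_mem_inter_left hy)
        · intro m hm
          calc ((l.map (· ∩ B)).filter (fun C => decide (C ≠ ∅))).length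
              ≤ (l.map (· ∩ B)).length := List.length_filter_le _ _
            _ = l.length := List.length_map _
            _ ≤ m := hmin m (hBA hm)
        · ext x
          simp only [mem_unionL, List.mem_filter, List.mem_map, decide_eq_true_eq]
          constructor
          · intro hx
            obtain ⟨C, hC, hxC⟩ := (mem_unionL.1 (hBA hx) : ∃ C ∈ l, x ∈ C)
            refine ⟨C ∩ B, ⟨⟨C, hC, rfl⟩, ?_⟩, Finset.mem_inter.2 ⟨hxC, hx⟩⟩
            intro h
            have : x ∈ C ∩ B := Finset.mem_inter.2 ⟨hxC, hx⟩
            rw [h] at this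
            simp at this
          · rintro ⟨C', ⟨⟨C, hC, rfl⟩, -⟩, hxC⟩
            exact Finset.mem_of_mem_inter_right hxC
        · intro h
          obtain ⟨x, hx⟩ := Finset.nonempty_iff_ne_empty.2 hBne
          obtain ⟨C, hC, hxC⟩ := (mem_unionL.1 (hBA hx) : ∃ C ∈ l, x ∈ C)
          have hmem : C ∩ B ∈ (l.map (· ∩ B)).filter (fun C => decide (C ≠ ∅)) := by
            rw [List.mem_filter, decide_eq_true_eq]
            refine ⟨List.mem_map.2 ⟨C, hC, rfl⟩, ?_⟩
            intro h'
            have : x ∈ C ∩ B := Finset.mem_inter.2 ⟨hxC, hx⟩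
            rw [h'] at this
            simp at this
          rw [h] at hmem
          simp at hmem
    · rw [SS.lim_def ξ hξ hlim] at hA ⊢
      rcases hA with rfl | ⟨-, m, hmge, hAm⟩
      · exact absurd (Finset.subset_empty.1 hBA) hBne
      · have h1 : SS.limSeq ξ m + 1 < ξ := by
          rw [Ordinal.add_one_eq_succ]
          exact hlim.succ_lt (SS.limSeq_lt ξ hξ hlim m)
        exact Or.inr ⟨Finset.nonempty_iff_ne_empty.2 hBne, m,
          fun x hx => hmge x (hBA hx), IH _ h1 (h1.trans hξ) A hAm B hBA⟩

lemma S_threshold (SS : SchreierSystem) : ∀ β : Ordinal, β < omega1 → ∀ α ≤ β,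
    ∃ t : ℕ, 1 ≤ t ∧ ∀ A ∈ SS.S α, (∀ x ∈ A, t ≤ x) → A ∈ SS.S β := by
  intro β
  induction β using Ordinal.induction with
  | h β IH =>
    intro hβ α hα
    rcases eq_or_lt_of_le hα with rfl | hlt
    · exact ⟨1, le_refl 1, fun A hA _ => hA⟩
    rcases Ordinal.zero_or_succ_or_isSuccLimit β with rfl | ⟨ζ, rfl⟩ | hlim
    · exact absurd hlt (not_lt_of_ge zero_le)
    · have hζξ : ζ < ζ + 1 := by rw [Ordinal.add_one_eq_succ]; exact Order.lt_succ ζ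
      have hαζ : α ≤ ζ := Order.lt_succ_iff.1 hlt
      rw [← Ordinal.add_one_eq_succ] at hβ ⊢
      obtain ⟨t, ht1, ht⟩ := IH ζ (Order.lt_succ ζ) (hζξ.trans hβ) α hαζ
      exact ⟨t, ht1, fun A hA hmin =>
        S_up SS (ht A hA hmin) (fun x hx => lt_of_lt_of_le ht1 (hmin x hx))⟩
    · obtain ⟨m, hm⟩ := SS.limSeq_cofinal β hβ hlim α hlt
      have h1 : SS.limSeq β m + 1 < β := by
        rw [Ordinal.add_one_eq_succ]
        exact hlim.succ_lt (SS.limSeq_lt β hβ hlim m)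
      have hα1 : α ≤ SS.limSeq β m + 1 := le_trans hm (le_of_lt (by
        rw [Ordinal.add_one_eq_succ]; exact Order.lt_succ _))
      obtain ⟨t, ht1, ht⟩ := IH _ h1 (h1.trans hβ) α hα1
      refine ⟨max t (m + 1), le_trans ht1 (le_max_left _ _), fun A hA hmin => ?_⟩
      rw [SS.lim_def β hβ hlim]
      rcases eq_or_ne A ∅ with rfl | hne
      · exact Or.inl rfl
      · refine Or.inr ⟨Finset.nonempty_iff_ne_empty.2 hne, m, ?_, ?_⟩
        · intro x hx
          exact le_trans (le_trans (Nat.le_succ m) (le_max_right t (m + 1))) (hmin x hx)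
        · exact ht A hA (fun x hx => le_trans (le_max_left _ _) (hmin x hx))

lemma count_mono_pred {p q : ℕ → Prop} [DecidablePred p] [DecidablePred q]
    (h : ∀ x, p x → q x) (k : ℕ) : Nat.count p k ≤ Nat.count q k := by
  rw [Nat.count_eq_card_filter_range, Nat.count_eq_card_filter_range]
  apply Finset.card_le_card
  intro x hx
  rw [Finset.mem_filter] at hx ⊢
  exact ⟨hx.1, h x hx.2⟩

lemma nth_le_nth_of_subset {M L : Set ℕ} (hML : M ⊆ L) (hM : M.Infinite) (i : ℕ) :
    Nat.nth (· ∈ L) i ≤ Nat.nth (· ∈ M) i := by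
  classical
  have hM' : (setOf (· ∈ M)).Infinite := by exact hM
  have hL' : (setOf (· ∈ L)).Infinite := by
    exact hM.mono hML
  have hy : Nat.nth (· ∈ M) i ∈ M := Nat.nth_mem_of_infinite hM' i
  have h1 : Nat.count (· ∈ M) (Nat.nth (· ∈ M) i) = i := Nat.count_nth_of_infinite hM' i
  have h2 : i ≤ Nat.count (· ∈ L) (Nat.nth (· ∈ M) i) :=
    le_trans (le_of_eq h1.symm) (count_mono_pred (fun x hx => hML hx) _)
  calc Nat.nth (· ∈ L) i
      ≤ Nat.nth (· ∈ L) (Nat.count (· ∈ L) (Nat.nth (· ∈ M) i)) := (Nat.nth_le_nth hL').2 h2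
    _ = Nat.nth (· ∈ M) i := Nat.nth_count (hML hy)

lemma nth_range_strictMono {u : ℕ → ℕ} (hu : StrictMono u) (i : ℕ) :
    Nat.nth (· ∈ Set.range u) i = u i := by
  classical
  have hmem : u i ∈ Set.range u := ⟨i, rfl⟩
  have hcount : Nat.count (· ∈ Set.range u) (u i) = i := by
    rw [Nat.count_eq_card_filter_range]
    have he : (Finset.range (u i)).filter (· ∈ Set.range u) = (Finset.range i).image u := by
      ext x
      simp only [Finset.mem_filter, Finset.mem_range, Set.mem_range, Finset.mem_image]
      constructor
      · rintro ⟨hlt, j, rfl⟩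
        exact ⟨j, hu.lt_iff_lt.1 hlt, rfl⟩
      · rintro ⟨j, hj, rfl⟩
        exact ⟨hu hj, j, rfl⟩
    rw [he, Finset.card_image_of_injective _ hu.injective, Finset.card_range]
  conv_lhs => rw [← hcount]
  exact Nat.nth_count hmem

lemma exists_seq (T : ℕ → Set ℕ) (hT : ∀ k, (T k).Infinite) (g : ℕ → ℕ)
    (f : ℕ → ℕ → ℕ) :
    ∃ u : ℕ → ℕ, (∀ k, u k ∈ T k) ∧ (∀ k, g k < u k) ∧
      (∀ k, max (u k) (f k (u k)) < u (k + 1)) := by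
  classical
  have hstep : ∀ k b : ℕ, ∃ x, x ∈ T k ∧ b < x := by
    intro k b
    obtain ⟨x, hx1, hx2⟩ := (hT k).exists_gt b
    exact ⟨x, hx1, hx2⟩
  let pick : ∀ k b : ℕ, {x : ℕ // x ∈ T k ∧ b < x} := fun k b =>
    ⟨Classical.choose (hstep k b), Classical.choose_spec (hstep k b)⟩
  let u : ℕ → ℕ := fun k => Nat.rec (pick 0 (g 0)).1
    (fun k prev => (pick (k + 1) (max (max prev (f k prev)) (g (k + 1)))).1) k
  have h0 : u 0 ∈ T 0 ∧ g 0 < u 0 := (pick 0 (g 0)).2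
  have hsucc : ∀ k, u (k + 1) ∈ T (k + 1) ∧
      max (max (u k) (f k (u k))) (g (k + 1)) < u (k + 1) := fun k => (pick (k + 1) _).2
  refine ⟨u, ?_, ?_, ?_⟩
  · intro k
    cases k with
    | zero => exact h0.1
    | succ k => exact (hsucc k).1
  · intro k
    cases k with
    | zero => exact h0.2
    | succ k => exact lt_of_le_of_lt (le_max_right _ _) (hsucc k).2
  · intro k
    exact lt_of_le_of_lt (le_max_left _ _) (hsucc k).2

lemma exists_chain {α : Type*} (P : ℕ → α → Prop) (R : α → α → Prop)
    (h0 : ∃ a, P 0 a) (hstep : ∀ m a, P m a → ∃ b, P (m + 1) b ∧ R b a) :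
    ∃ f : ℕ → α, (∀ m, P m (f m)) ∧ ∀ m, R (f (m + 1)) (f m) := by
  classical
  let G : ∀ m : ℕ, {a : α // P m a} := fun m =>
    Nat.rec ⟨Classical.choose h0, Classical.choose_spec h0⟩
      (fun m prev => ⟨Classical.choose (hstep m prev.1 prev.2),
        (Classical.choose_spec (hstep m prev.1 prev.2)).1⟩) m
  refine ⟨fun m => (G m).1, fun m => (G m).2, fun m => ?_⟩
  exact (Classical.choose_spec (hstep m (G m).1 (G m).2)).2

lemma crossBlock {u : ℕ → ℕ} (hu : StrictMono u) {E : ℕ → Finset ℕ}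
    (hEge : ∀ i, 1 ≤ i → ∀ m ∈ E i, i ≤ m) (hpos : ∀ k, 1 ≤ u k)
    (hcap : ∀ k, ∀ x ∈ E (u k), x < u (k + 1)) {i j : ℕ} (hij : i < j) :
    BlockLt (E (u i)) (E (u j)) := by
  intro x hx y hy
  have h1 : x < u (i + 1) := hcap i x hx
  have h2 : u (i + 1) ≤ u j := hu.monotone (Nat.succ_le_of_lt hij)
  exact lt_of_lt_of_le h1 (h2.trans (hEge (u j) (hpos j) y hy))

def GoodFor (SS : SchreierSystem) (γ ϱ : Ordinal) (E : ℕ → Finset ℕ)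
    (L : Set ℕ) (w : ℕ → ℕ) : Prop :=
  ∀ F : Finset ℕ, F ∈ SS.S ϱ → ∀ φ : ℕ → ℕ, StrictMonoOn φ ↑F →
    (∀ j ∈ F, φ j ∈ L ∧ w j ≤ φ j) →
    (F.biUnion fun j => E (φ j)) ∈ SS.S (γ + ϱ)

theorem keyP (SS : SchreierSystem) (n : ℕ) (hn : 0 < n) (γ : Ordinal) (hγ : γ < omega1)
    (E : ℕ → Finset ℕ) (hE : ∀ i, 1 ≤ i → E i ∈ AnS SS n γ)
    (hEge : ∀ i, 1 ≤ i → ∀ m ∈ E i, i ≤ m) :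
    ∀ ϱ : Ordinal, 1 ≤ ϱ → ϱ < omega1 →
    ∀ K : Set ℕ, K.Infinite → (∀ m ∈ K, 0 < m) →
    ∃ (L : Set ℕ) (w : ℕ → ℕ), L ⊆ K ∧ L.Infinite ∧
      (∀ j : ℕ, 1 ≤ j → w j ≤ Nat.nth (· ∈ L) (j - 1)) ∧ GoodFor SS γ ϱ E L w := by
  intro ϱ
  induction ϱ using Ordinal.induction with
  | h ϱ IH =>
    intro hϱ1 hϱω K hK hKpos
    rcases Ordinal.zero_or_succ_or_isSuccLimit ϱ with rfl | ⟨ζ, rfl⟩ | hlim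
    · exact absurd hϱ1 (by simp)
    · rcases eq_or_ne ζ 0 with rfl | hζ0
      · -- base case ϱ = 1
        rw [show Order.succ (0:Ordinal) = 1 from Ordinal.succ_zero]
        obtain ⟨u, huT, hug, hustep⟩ := exists_seq (fun _ => K) (fun _ => hK)
          (fun k => n * (k + 1) + (k + 2)) (fun _ x => (E x).sup id)
        have hu : StrictMono u := strictMono_nat_of_lt_succ
          (fun k => lt_of_le_of_lt (le_max_left _ _) (hustep k))
        have hupos : ∀ k, 1 ≤ u k := fun k => hKpos _ (huT k)
        have hcap : ∀ k, ∀ x ∈ E (u k), x < u (k + 1) := fun k x hx =>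
          lt_of_le_of_lt (le_trans (Finset.le_sup (f := id) hx) (le_max_right _ _)) (hustep k)
        have hLK : Set.range u ⊆ K := by rintro x ⟨k, rfl⟩; exact huT k
        refine ⟨Set.range u, fun j => n * j + (j + 1), hLK,
          Set.infinite_range_of_injective hu.injective, ?_, ?_⟩
        · intro j hj
          rw [nth_range_strictMono hu]
          have h1 := hug (j - 1)
          rw [show j - 1 + 1 = j from Nat.succ_pred_eq_of_pos hj,
            show j - 1 + 2 = j + 1 by omega] at h1
          exact h1.le
        · intro F hF φ hmono hφ
          rcases eq_or_ne (F.biUnion fun j => E (φ j)) ∅ with hU | hU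
          · rw [hU]
            exact S_empty SS _ (add_lt_omega1 hγ one_lt_omega1)
          rw [show (1:Ordinal) = 0 + 1 from (zero_add 1).symm, mem_S_succ_iff] at hF
          rcases hF with rfl | ⟨lF, hFbl, hFord, hFmin, hFU, hFne⟩
          · simp at hU
          have hφpos : ∀ j ∈ F, 1 ≤ φ j := fun j hj => hKpos _ (hLK (hφ j hj).1)
          have hφele : ∀ j ∈ F, ∀ m ∈ E (φ j), φ j ≤ m := fun j hj => hEge (φ j) (hφpos j hj)
          have hdec : ∀ j : ℕ, ∃ lj : List (Finset ℕ), j ∈ F →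
              lj.length ≤ n ∧ (∀ B ∈ lj, B.Nonempty ∧ B ∈ SS.S γ) ∧
              lj.Pairwise BlockLt ∧ unionL lj = E (φ j) := by
            intro j
            by_cases hj : j ∈ F
            · rcases AnS_list (hE (φ j) (hφpos j hj)) with h0 | ⟨lj, h1, h2, h3, h4⟩
              · exact ⟨[], fun _ => ⟨by simp, by simp, by simp, by simp [h0]⟩⟩
              · exact ⟨lj, fun _ => ⟨h1, h2, h3, h4.symm⟩⟩
            · exact ⟨[], fun h => absurd h hj⟩
          choose lE hlE using hdec
          have hsubE : ∀ j (hj : j ∈ F), ∀ B ∈ lE j, ∀ x ∈ B, x ∈ E (φ j) := by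
            intro j hj B hB x hx
            rw [← (hlE j hj).2.2.2]
            exact mem_unionL.2 ⟨B, hB, hx⟩
          have hmemU : ∀ B, B ∈ (F.sort (· ≤ ·)).flatMap lE ↔ ∃ j ∈ F, B ∈ lE j := by
            intro B
            rw [List.mem_flatMap]
            constructor
            · rintro ⟨j, hj, hB⟩; exact ⟨j, (Finset.mem_sort _).1 hj, hB⟩
            · rintro ⟨j, hj, hB⟩; exact ⟨j, (Finset.mem_sort _).2 hj, hB⟩
          have hcross : ∀ a ∈ F, ∀ b ∈ F, a < b → BlockLt (E (φ a)) (E (φ b)) := by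
            intro a ha b hb hab
            obtain ⟨i, hi⟩ := (hφ a ha).1
            obtain ⟨j', hj'⟩ := (hφ b hb).1
            have hij : i < j' := by
              apply hu.lt_iff_lt.1
              rw [hi, hj']
              exact hmono ha hb hab
            have := crossBlock hu hEge hupos hcap hij
            rwa [hi, hj'] at this
          rw [mem_S_succ_iff]
          refine Or.inr ⟨(F.sort (· ≤ ·)).flatMap lE, ?_, ?_, ?_, ?_, ?_⟩
          · intro B hB
            obtain ⟨j, hj, hBj⟩ := (hmemU B).1 hB
            exact (hlE j hj).2.1 B hBj
          · rw [List.flatMap_def, List.pairwise_flatten]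
            constructor
            · intro l' hl'
              obtain ⟨j, hj, rfl⟩ := List.mem_map.1 hl'
              exact (hlE j ((Finset.mem_sort _).1 hj)).2.2.1
            · rw [List.pairwise_map]
              refine (Finset.sortedLT_sort F).pairwise.imp_of_mem ?_
              intro a b ha hb hab B hB B' hB' x hx y hy
              have haF := (Finset.mem_sort _).1 ha
              have hbF := (Finset.mem_sort _).1 hb
              exact hcross a haF b hbF hab x (hsubE a haF B hB x hx) y (hsubE b hbF B' hB' y hy)
          · intro m hm
            obtain ⟨j, hj, hmj⟩ := Finset.mem_biUnion.1 hm
            have hlen : ((F.sort (· ≤ ·)).flatMap lE).length ≤ F.card * n := by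
              rw [List.flatMap_def, List.length_flatten, List.map_map]
              have h2 := List.sum_le_card_nsmul ((F.sort (· ≤ ·)).map (List.length ∘ lE)) n ?_
              · simpa [List.length_map, Finset.length_sort, smul_eq_mul] using h2
              · intro x hx
                obtain ⟨j', hj', rfl⟩ := List.mem_map.1 hx
                exact (hlE j' ((Finset.mem_sort _).1 hj')).1
            have hcard : F.card ≤ lF.length := by
              have h1 : F.card ≤ (lF.map Finset.card).sum := by
                rw [hFU]; exact card_unionL_le lF
              have h2 : (lF.map Finset.card).sum ≤ (lF.map Finset.card).length • 1 := by
                apply List.sum_le_card_nsmul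
                intro x hx
                obtain ⟨B, hB, rfl⟩ := List.mem_map.1 hx
                have hB0 := (hFbl B hB).2
                rw [SS.zero_def] at hB0
                rcases hB0 with rfl | ⟨m', hm', rfl⟩
                · exact absurd (hFbl _ hB).1 (by simp)
                · simp
              simpa [List.length_map] using le_trans h1 h2
            calc ((F.sort (· ≤ ·)).flatMap lE).length ≤ F.card * n := hlen
              _ ≤ lF.length * n := Nat.mul_le_mul hcard (le_refl n)
              _ ≤ j * n := Nat.mul_le_mul (hFmin j hj) (le_refl n)
              _ ≤ n * j + (j + 1) := by rw [Nat.mul_comm]; omega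
              _ ≤ φ j := (hφ j hj).2
              _ ≤ m := hφele j hj m hmj
          · ext x
            simp only [Finset.mem_biUnion, mem_unionL]
            constructor
            · rintro ⟨j, hj, hx⟩
              rw [← (hlE j hj).2.2.2] at hx
              obtain ⟨B, hB, hxB⟩ := mem_unionL.1 hx
              exact ⟨B, (hmemU B).2 ⟨j, hj, hB⟩, hxB⟩
            · rintro ⟨B, hB, hxB⟩
              obtain ⟨j, hj, hBj⟩ := (hmemU B).1 hB
              exact ⟨j, hj, hsubE j hj B hBj x hxB⟩
          · intro h
            obtain ⟨x, hx⟩ := Finset.nonempty_iff_ne_empty.2 hU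
            obtain ⟨j, hj, hxj⟩ := Finset.mem_biUnion.1 hx
            have hxu : x ∈ unionL (lE j) := by rw [(hlE j hj).2.2.2]; exact hxj
            obtain ⟨B, hB, -⟩ := mem_unionL.1 hxu
            have hBU : B ∈ (F.sort (· ≤ ·)).flatMap lE := (hmemU B).2 ⟨j, hj, hB⟩
            rw [h] at hBU
            simp at hBU
      · -- successor case
        have hζ1 : (1:Ordinal) ≤ ζ := Ordinal.one_le_iff_ne_zero.2 hζ0
        have hζsucc : ζ < Order.succ ζ := Order.lt_succ ζ
        have hζω : ζ < omega1 := lt_trans hζsucc hϱω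
        obtain ⟨L₁, w₁, hL₁K, hL₁inf, hnth₁, hGood₁⟩ := IH ζ hζsucc hζ1 hζω K hK hKpos
        have hL₁pos : ∀ m ∈ L₁, 0 < m := fun m hm => hKpos m (hL₁K hm)
        obtain ⟨u, huT, hug, hustep⟩ := exists_seq (fun _ => L₁) (fun _ => hL₁inf)
          (fun k => max (w₁ (k + 1)) (k + 2)) (fun _ x => (E x).sup id)
        have hu : StrictMono u := strictMono_nat_of_lt_succ
          (fun k => lt_of_le_of_lt (le_max_left _ _) (hustep k))
        have hupos : ∀ k, 1 ≤ u k := fun k => hL₁pos _ (huT k)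
        have hcap : ∀ k, ∀ x ∈ E (u k), x < u (k + 1) := fun k x hx =>
          lt_of_le_of_lt (le_trans (Finset.le_sup (f := id) hx) (le_max_right _ _)) (hustep k)
        have hLL₁ : Set.range u ⊆ L₁ := by rintro x ⟨k, rfl⟩; exact huT k
        refine ⟨Set.range u, fun j => max (w₁ j) (j + 1), hLL₁.trans hL₁K,
          Set.infinite_range_of_injective hu.injective, ?_, ?_⟩
        · intro j hj
          rw [nth_range_strictMono hu]
          have h1 := hug (j - 1)
          rw [show j - 1 + 1 = j from Nat.succ_pred_eq_of_pos hj,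
            show j - 1 + 2 = j + 1 by omega] at h1
          exact h1.le
        · intro F hF φ hmono hφ
          rcases eq_or_ne (F.biUnion fun j => E (φ j)) ∅ with hU | hU
          · rw [hU]
            exact S_empty SS _ (add_lt_omega1 hγ hϱω)
          rw [← Ordinal.add_one_eq_succ, mem_S_succ_iff] at hF
          rcases hF with rfl | ⟨lF, hFbl, hFord, hFmin, hFU, hFne⟩
          · simp at hU
          have hsubF : ∀ Fi ∈ lF, Fi ⊆ F := by
            intro Fi hFi x hx
            rw [hFU]
            exact mem_unionL.2 ⟨Fi, hFi, hx⟩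
          have hgoal : γ + Order.succ ζ = (γ + ζ) + 1 := by
            rw [← Ordinal.add_one_eq_succ, ← add_assoc]
          rw [hgoal, mem_S_succ_iff]
          have hpieces : ∀ Fi ∈ lF, (Fi.biUnion fun j => E (φ j)) ∈ SS.S (γ + ζ) := by
            intro Fi hFi
            refine hGood₁ Fi (hFbl Fi hFi).2 φ (hmono.mono (Finset.coe_subset.2 (hsubF Fi hFi))) ?_
            intro j hj
            exact ⟨hLL₁ (hφ j (hsubF Fi hFi hj)).1,
              le_trans (le_max_left _ _) (hφ j (hsubF Fi hFi hj)).2⟩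
          refine Or.inr ⟨(lF.map (fun Fi => Fi.biUnion fun j => E (φ j))).filter
            (fun A => decide (A ≠ ∅)), ?_, ?_, ?_, ?_, ?_⟩
          · intro B hB
            rw [List.mem_filter] at hB
            obtain ⟨hB1, hB2⟩ := hB
            rw [decide_eq_true_eq] at hB2
            obtain ⟨Fi, hFi, rfl⟩ := List.mem_map.1 hB1
            exact ⟨Finset.nonempty_iff_ne_empty.2 hB2, hpieces Fi hFi⟩
          · refine List.Pairwise.filter _ (List.pairwise_map.2 (hFord.imp_of_mem ?_))
            intro Fi Fj hFi hFj hlt x hx y hy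
            obtain ⟨a, ha, hxa⟩ := Finset.mem_biUnion.1 hx
            obtain ⟨b, hb, hyb⟩ := Finset.mem_biUnion.1 hy
            have haF := hsubF Fi hFi ha
            have hbF := hsubF Fj hFj hb
            have hab : a < b := hlt a ha b hb
            obtain ⟨i, hi⟩ := (hφ a haF).1
            obtain ⟨j', hj'⟩ := (hφ b hbF).1
            have hij : i < j' := hu.lt_iff_lt.1 (by rw [hi, hj']; exact hmono haF hbF hab)
            have hc := crossBlock hu hEge hupos hcap hij
            rw [hi, hj'] at hc
            exact hc x hxa y hyb
          · intro m hm
            obtain ⟨j, hj, hmj⟩ := Finset.mem_biUnion.1 hm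
            have h1 : ((lF.map (fun Fi => Fi.biUnion fun j => E (φ j))).filter
                (fun A => decide (A ≠ ∅))).length ≤ lF.length := by
              calc ((lF.map (fun Fi => Fi.biUnion fun j => E (φ j))).filter
                  (fun A => decide (A ≠ ∅))).length
                  ≤ (lF.map (fun Fi => Fi.biUnion fun j => E (φ j))).length :=
                    List.length_filter_le _ _
                _ = lF.length := List.length_map _
            have hφj1 : 1 ≤ φ j := hKpos _ (hL₁K (hLL₁ (hφ j hj).1))
            calc ((lF.map (fun Fi => Fi.biUnion fun j => E (φ j))).filter
                (fun A => decide (A ≠ ∅))).length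
                ≤ lF.length := h1
              _ ≤ j := hFmin j hj
              _ ≤ max (w₁ j) (j + 1) := le_trans (Nat.le_succ j) (le_max_right _ _)
              _ ≤ φ j := (hφ j hj).2
              _ ≤ m := hEge (φ j) hφj1 m hmj
          · ext x
            simp only [Finset.mem_biUnion, mem_unionL, List.mem_filter, List.mem_map,
              decide_eq_true_eq]
            constructor
            · rintro ⟨j, hj, hx⟩
              have hjU : j ∈ unionL lF := by rw [← hFU]; exact hj
              obtain ⟨Fi, hFi, hjFi⟩ := mem_unionL.1 hjU
              refine ⟨Fi.biUnion fun j => E (φ j), ⟨⟨Fi, hFi, rfl⟩, ?_⟩, ?_⟩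
              · intro hemp
                have hx2 : x ∈ Fi.biUnion fun j => E (φ j) :=
                  Finset.mem_biUnion.2 ⟨j, hjFi, hx⟩
                rw [hemp] at hx2
                simp at hx2
              · exact Finset.mem_biUnion.2 ⟨j, hjFi, hx⟩
            · rintro ⟨B, ⟨⟨Fi, hFi, rfl⟩, -⟩, hxB⟩
              obtain ⟨j, hj, hxj⟩ := Finset.mem_biUnion.1 hxB
              exact ⟨j, hsubF Fi hFi hj, hxj⟩
          · intro h
            obtain ⟨x, hx⟩ := Finset.nonempty_iff_ne_empty.2 hU
            obtain ⟨j, hj, hxj⟩ := Finset.mem_biUnion.1 hx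
            have hjU : j ∈ unionL lF := by rw [← hFU]; exact hj
            obtain ⟨Fi, hFi, hjFi⟩ := mem_unionL.1 hjU
            have hmem : (Fi.biUnion fun j => E (φ j)) ∈
                (lF.map (fun Fi => Fi.biUnion fun j => E (φ j))).filter
                  (fun A => decide (A ≠ ∅)) := by
              rw [List.mem_filter, decide_eq_true_eq]
              refine ⟨List.mem_map.2 ⟨Fi, hFi, rfl⟩, ?_⟩
              intro hemp
              have hx2 : x ∈ Fi.biUnion fun j => E (φ j) :=
                Finset.mem_biUnion.2 ⟨j, hjFi, hxj⟩
              rw [hemp] at hx2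
              simp at hx2
            rw [h] at hmem
            simp at hmem
    · -- limit case
      have hγϱ : γ + ϱ < omega1 := add_lt_omega1 hγ hϱω
      have hγϱlim : Order.IsSuccLimit (γ + ϱ) := Ordinal.isSuccLimit_add γ hlim
      have hτ'lt : ∀ m : ℕ, SS.limSeq ϱ m + 1 < ϱ := fun m => by
        rw [Ordinal.add_one_eq_succ]
        exact hlim.succ_lt (SS.limSeq_lt ϱ hϱω hlim m)
      have h1τ' : ∀ m : ℕ, (1:Ordinal) ≤ SS.limSeq ϱ m + 1 := fun m =>
        Order.one_le_iff_pos.2 (lt_of_le_of_lt zero_le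
          (by rw [Ordinal.add_one_eq_succ]; exact Order.lt_succ _))
      obtain ⟨TW, hTW, hTWchain⟩ := exists_chain
        (fun m (p : Set ℕ × (ℕ → ℕ)) =>
          p.1 ⊆ K ∧ p.1.Infinite ∧ GoodFor SS γ (SS.limSeq ϱ m + 1) E p.1 p.2)
        (fun q p => q.1 ⊆ p.1)
        (by
          obtain ⟨L0, w0, h1, h2, h3, h4⟩ := IH (SS.limSeq ϱ 0 + 1) (hτ'lt 0) (h1τ' 0)
            ((hτ'lt 0).trans hϱω) K hK hKpos
          exact ⟨(L0, w0), h1, h2, h4⟩)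
        (by
          intro m p hp
          obtain ⟨L', w', h1, h2, h3, h4⟩ := IH (SS.limSeq ϱ (m + 1) + 1) (hτ'lt (m + 1))
            (h1τ' (m + 1)) ((hτ'lt (m + 1)).trans hϱω) p.1 hp.2.1
            (fun x hx => hKpos x (hp.1 hx))
          exact ⟨(L', w'), ⟨h1.trans hp.1, h2, h4⟩, h1⟩)
      have hTanti : ∀ a b : ℕ, a ≤ b → (TW b).1 ⊆ (TW a).1 := by
        intro a b hab
        induction hab with
        | refl => exact subset_rfl
        | step h ih => exact (hTWchain _).trans ih
      have hcofsel : ∀ m : ℕ, ∃ N : ℕ, γ + (SS.limSeq ϱ m + 1) ≤ SS.limSeq (γ + ϱ) N :=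
        fun m => SS.limSeq_cofinal (γ + ϱ) hγϱ hγϱlim _ ((add_lt_add_iff_left γ).2 (hτ'lt m))
      choose Nf hNf using hcofsel
      have hτNω : ∀ m : ℕ, SS.limSeq (γ + ϱ) (Nf m) < omega1 := fun m =>
        lt_trans (SS.limSeq_lt _ hγϱ hγϱlim _) hγϱ
      have hth1 := fun m => S_threshold SS (SS.limSeq (γ + ϱ) (Nf m)) (hτNω m)
        (γ + (SS.limSeq ϱ m + 1)) (hNf m)
      choose t₁ ht₁pos ht₁ using hth1
      have hth2 := fun m => S_threshold SS (SS.limSeq (γ + ϱ) (Nf m)) (hτNω m) γ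
        (le_trans (le_self_add) (hNf m))
      choose t₂ ht₂pos ht₂ using hth2
      obtain ⟨g, hg, hgn⟩ : ∃ g : ℕ → ℕ,
          (∀ m k : ℕ, m ≤ k + 1 →
            max (max (Nf m) (t₁ m)) (max (t₂ m) ((TW m).2 (k + 1))) ≤ g k) ∧
          (∀ k, n + 1 ≤ g k) := by
        refine ⟨fun k => (Finset.range (k + 2)).sup
          (fun m => max (max (Nf m) (t₁ m)) (max (t₂ m) ((TW m).2 (k + 1)))) + (n + k + 2),
          ?_, ?_⟩
        · intro m k hmk
          dsimp only
          exact le_trans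
            (Finset.le_sup (f := fun m => max (max (Nf m) (t₁ m)) (max (t₂ m) ((TW m).2 (k + 1))))
              (Finset.mem_range.2 (by omega))) (Nat.le_add_right _ _)
        · intro k
          dsimp only
          omega
      obtain ⟨u, huT, hug, hustep⟩ := exists_seq (fun m => (TW m).1)
        (fun m => (hTW m).2.1) g (fun _ x => (E x).sup id)
      have hu : StrictMono u := strictMono_nat_of_lt_succ
        (fun k => lt_of_le_of_lt (le_max_left _ _) (hustep k))
      have hLK : Set.range u ⊆ K := by rintro x ⟨k, rfl⟩; exact (hTW k).1 (huT k)
      have hupos : ∀ k, 1 ≤ u k := fun k => hKpos _ (hLK ⟨k, rfl⟩)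
      have hcap : ∀ k, ∀ x ∈ E (u k), x < u (k + 1) := fun k x hx =>
        lt_of_le_of_lt (le_trans (Finset.le_sup (f := id) hx) (le_max_right _ _)) (hustep k)
      refine ⟨Set.range u, fun j => if j = 0 then 0 else u (j - 1), hLK,
        Set.infinite_range_of_injective hu.injective, ?_, ?_⟩
      · intro j hj
        dsimp only
        rw [nth_range_strictMono hu, if_neg (by omega)]
      · intro F hF φ hmono hφ
        rcases eq_or_ne (F.biUnion fun j => E (φ j)) ∅ with hU | hU
        · rw [hU]; exact S_empty SS _ hγϱ
        have hFne : F.Nonempty := by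
          rcases F.eq_empty_or_nonempty with rfl | h
          · simp at hU
          · exact h
        have hFpos : ∀ j ∈ F, 0 < j := fun j hj => S_pos SS ϱ hϱω F hF j hj
        rw [SS.lim_def ϱ hϱω hlim] at hF
        simp only [Set.mem_setOf_eq] at hF
        rcases hF with rfl | ⟨-, n₀, hn₀, hFm⟩
        · simp at hU
        set j₁ := F.min' hFne with hj₁def
        have hj₁F : j₁ ∈ F := F.min'_mem hFne
        have hj₁pos : 0 < j₁ := hFpos j₁ hj₁F
        have hn₀j₁ : n₀ ≤ j₁ := hn₀ j₁ hj₁F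
        have hwle : ∀ j ∈ F, u (j - 1) ≤ φ j := by
          intro j hj
          have h1 := (hφ j hj).2
          dsimp only at h1
          rwa [if_neg (by have := hFpos j hj; omega)] at h1
        have hval : ∀ j ∈ F, ∃ k, u k = φ j ∧ j - 1 ≤ k := by
          intro j hj
          obtain ⟨k, hk⟩ := (hφ j hj).1
          refine ⟨k, hk, hu.le_iff_le.1 ?_⟩
          rw [hk]
          exact hwle j hj
        have hφpos : ∀ j ∈ F, 1 ≤ φ j := fun j hj => hKpos _ (hLK (hφ j hj).1)
        set F' := F.erase j₁ with hF'def
        have hF'sub : F' ⊆ F := Finset.erase_subset _ _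
        have hF'gt : ∀ j ∈ F', j₁ < j := by
          intro j hj
          have h1 : j ≠ j₁ := Finset.ne_of_mem_erase hj
          have h2 : j₁ ≤ j := F.min'_le j (hF'sub hj)
          omega
        have hF'mem : F' ∈ SS.S (SS.limSeq ϱ n₀ + 1) :=
          S_hereditary SS _ ((hτ'lt n₀).trans hϱω) F hFm F' hF'sub
        have hUtail : (F'.biUnion fun j => E (φ j)) ∈ SS.S (γ + (SS.limSeq ϱ n₀ + 1)) := by
          refine (hTW n₀).2.2 F' hF'mem φ (hmono.mono (Finset.coe_subset.2 hF'sub)) ?_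
          intro j hj
          obtain ⟨k, hk, hk2⟩ := hval j (hF'sub hj)
          have hj1 : j₁ ≤ j - 1 := by have := hF'gt j hj; omega
          constructor
          · rw [← hk]
            exact hTanti n₀ k (le_trans hn₀j₁ (le_trans hj1 hk2)) (huT k)
          · have hb : (TW n₀).2 ((j - 1) + 1) ≤ g (j - 1) :=
              le_trans (le_trans (le_max_right _ _) (le_max_right _ _))
                (hg n₀ (j - 1) (by omega))
            rw [show j - 1 + 1 = j by have := hFpos j (hF'sub hj); omega] at hb
            exact le_trans hb (le_trans (hug (j - 1)).le (hwle j (hF'sub hj)))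
        have hxtail : ∀ x ∈ F'.biUnion fun j => E (φ j), u j₁ ≤ x := by
          intro x hx
          obtain ⟨j, hj, hxj⟩ := Finset.mem_biUnion.1 hx
          have h1 : φ j ≤ x := hEge (φ j) (hφpos j (hF'sub hj)) x hxj
          have h2 : u j₁ ≤ u (j - 1) := hu.monotone (by have := hF'gt j hj; omega)
          exact le_trans h2 (le_trans (hwle j (hF'sub hj)) h1)
        have hUtailτ : (F'.biUnion fun j => E (φ j)) ∈
            SS.S (SS.limSeq (γ + ϱ) (Nf n₀)) := by
          refine ht₁ n₀ _ hUtail ?_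
          intro x hx
          have hb : t₁ n₀ ≤ g j₁ :=
            le_trans (le_trans (le_max_right _ _) (le_max_left _ _)) (hg n₀ j₁ (by omega))
          exact le_trans hb (le_trans (hug j₁).le (hxtail x hx))
        have hxhead : ∀ x ∈ E (φ j₁), u (j₁ - 1) ≤ x := fun x hx =>
          le_trans (hwle j₁ hj₁F) (hEge (φ j₁) (hφpos j₁ hj₁F) x hx)
        obtain ⟨lE1, hlE1n, hlE1b, hlE1p, hlE1u⟩ : ∃ lE1 : List (Finset ℕ),
            lE1.length ≤ n ∧ (∀ B ∈ lE1, B.Nonempty ∧ B ∈ SS.S γ) ∧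
            lE1.Pairwise BlockLt ∧ unionL lE1 = E (φ j₁) := by
          rcases AnS_list (hE (φ j₁) (hφpos j₁ hj₁F)) with h0 | ⟨l, h1, h2, h3, h4⟩
          · exact ⟨[], by simp, by simp, by simp, by simp [h0]⟩
          · exact ⟨l, h1, h2, h3, h4.symm⟩
        have hlE1τ : ∀ B ∈ lE1, B.Nonempty ∧ B ∈ SS.S (SS.limSeq (γ + ϱ) (Nf n₀)) := by
          intro B hB
          refine ⟨(hlE1b B hB).1, ht₂ n₀ B (hlE1b B hB).2 ?_⟩
          intro x hx
          have hxE : x ∈ E (φ j₁) := by rw [← hlE1u]; exact mem_unionL.2 ⟨B, hB, hx⟩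
          have hb : t₂ n₀ ≤ g (j₁ - 1) :=
            le_trans (le_trans (le_max_left _ _) (le_max_right _ _))
              (hg n₀ (j₁ - 1) (by omega))
          exact le_trans hb (le_trans (hug (j₁ - 1)).le (hxhead x hxE))
        have hUeq : (F.biUnion fun j => E (φ j)) =
            E (φ j₁) ∪ (F'.biUnion fun j => E (φ j)) := by
          conv_lhs => rw [← Finset.insert_erase hj₁F]
          rw [Finset.biUnion_insert]
        set lT : List (Finset ℕ) := lE1 ++ (if (F'.biUnion fun j => E (φ j)) = ∅ then []
          else [F'.biUnion fun j => E (φ j)]) with hlTdef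
        have hlTmem : ∀ B ∈ lT, B.Nonempty ∧ B ∈ SS.S (SS.limSeq (γ + ϱ) (Nf n₀)) := by
          intro B hB
          rw [hlTdef, List.mem_append] at hB
          rcases hB with hB | hB
          · exact hlE1τ B hB
          · split at hB
            · simp at hB
            · next hne =>
              simp only [List.mem_singleton] at hB
              subst hB
              exact ⟨Finset.nonempty_iff_ne_empty.2 hne, hUtailτ⟩
        have hlTuni : unionL lT = F.biUnion fun j => E (φ j) := by
          rw [hlTdef, unionL_append, hlE1u, hUeq]
          congr 1
          split
          · next he => rw [he]; simp
          · simp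
        have hlTpair : lT.Pairwise BlockLt := by
          rw [hlTdef, List.pairwise_append]
          refine ⟨hlE1p, ?_, ?_⟩
          · split
            · simp
            · simp
          · intro B hB C hC
            split at hC
            · simp at hC
            · simp only [List.mem_singleton] at hC
              subst hC
              intro x hx y hy
              obtain ⟨j, hj, hyj⟩ := Finset.mem_biUnion.1 hy
              have hxE : x ∈ E (φ j₁) := by rw [← hlE1u]; exact mem_unionL.2 ⟨B, hB, hx⟩
              obtain ⟨i1, hi1⟩ := (hφ j₁ hj₁F).1
              obtain ⟨i2, hi2⟩ := (hφ j (hF'sub hj)).1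
              have hii : i1 < i2 := hu.lt_iff_lt.1
                (by rw [hi1, hi2]; exact hmono hj₁F (hF'sub hj) (hF'gt j hj))
              have hc := crossBlock hu hEge hupos hcap hii
              rw [hi1, hi2] at hc
              exact hc x hxE y hyj
        have hlTne : lT ≠ [] := by
          intro h
          obtain ⟨x, hx⟩ := Finset.nonempty_iff_ne_empty.2 hU
          have hx2 : x ∈ unionL lT := by rw [hlTuni]; exact hx
          rw [h] at hx2
          simp at hx2
        have hxU : ∀ x ∈ F.biUnion fun j => E (φ j), u (j₁ - 1) ≤ x := by
          intro x hx
          rw [hUeq] at hx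
          rcases Finset.mem_union.1 hx with hx | hx
          · exact hxhead x hx
          · exact le_trans (hu.monotone (by omega)) (hxtail x hx)
        have hUS : (F.biUnion fun j => E (φ j)) ∈
            SS.S (SS.limSeq (γ + ϱ) (Nf n₀) + 1) := by
          rw [mem_S_succ_iff]
          refine Or.inr ⟨lT, hlTmem, hlTpair, ?_, hlTuni.symm, hlTne⟩
          intro m hm
          have hlen : lT.length ≤ n + 1 := by
            rw [hlTdef, List.length_append]
            have h2 : (if (F'.biUnion fun j => E (φ j)) = ∅ then ([] : List (Finset ℕ))
                else [F'.biUnion fun j => E (φ j)]).length ≤ 1 := by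
              split <;> simp
            omega
          have hb : n + 1 ≤ g (j₁ - 1) := hgn _
          exact le_trans hlen (le_trans hb (le_trans (hug (j₁ - 1)).le (hxU m hm)))
        rw [SS.lim_def (γ + ϱ) hγϱ hγϱlim]
        refine Or.inr ⟨Finset.nonempty_iff_ne_empty.2 hU, Nf n₀, ?_, hUS⟩
        intro m hm
        have hb : Nf n₀ ≤ g (j₁ - 1) :=
          le_trans (le_trans (le_max_left _ _) (le_max_left _ _))
            (hg n₀ (j₁ - 1) (by omega))
        exact le_trans hb (le_trans (hug (j₁ - 1)).le (hxU m hm))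


/-- Proposition `combinatorics` (ii) of the paper. Given successive
sets `E_1 < E_2 < ⋯` in `A_n[S_γ]` with `min E_i ≥ i`, and an infinite `K`, there is an
infinite `L ⊆ K` such that for every infinite `M ⊆ L`,
`{⋃_{j ∈ F} E_{M(j)} : F ∈ S_ϱ} ⊆ S_{γ+ϱ}`. (Here `Nat.nth (· ∈ M) (j - 1)` is the
`j`-th smallest element `M(j)` of `M`.) -/
theorem statement10 (SS : SchreierSystem) (γ ϱ : Ordinal) (hγ : γ < omega1)
    (hϱ1 : 1 ≤ ϱ) (hϱ : ϱ < omega1) (n : ℕ) (hn : 0 < n)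
    (E : ℕ → Finset ℕ) (hE : ∀ i, 1 ≤ i → E i ∈ AnS SS n γ)
    (hEge : ∀ i, 1 ≤ i → ∀ m ∈ E i, i ≤ m)
    (hElt : ∀ i, 1 ≤ i → BlockLt (E i) (E (i + 1)))
    (K : Set ℕ) (hK : K.Infinite) (hKpos : ∀ m ∈ K, 0 < m) :
    ∃ L : Set ℕ, L ⊆ K ∧ L.Infinite ∧ ∀ M : Set ℕ, M ⊆ L → M.Infinite →
      ∀ F ∈ SS.S ϱ,
        (F.biUnion fun j => E (Nat.nth (· ∈ M) (j - 1))) ∈ SS.S (γ + ϱ) := by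
  obtain ⟨L, w, hLK, hLinf, hnth, hGood⟩ := keyP SS n hn γ hγ E hE hEge ϱ hϱ1 hϱ K hK hKpos
  refine ⟨L, hLK, hLinf, ?_⟩
  intro M hML hMinf F hF
  have hM' : (setOf (· ∈ M)).Infinite := by exact hMinf
  have hpos : ∀ j ∈ F, 0 < j := fun j hj => S_pos SS ϱ hϱ F hF j hj
  refine hGood F hF (fun j => Nat.nth (· ∈ M) (j - 1)) ?_ ?_
  · intro a ha b hb hab
    have ha1 : 0 < a := hpos a (Finset.mem_coe.1 ha)
    exact (Nat.nth_lt_nth hM').2 (by omega)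
  · intro j hj
    refine ⟨hML (Nat.nth_mem_of_infinite hM' (j - 1)), ?_⟩
    exact le_trans (hnth j (hpos j hj)) (nth_le_nth_of_subset hML hMinf (j - 1))

end SchreierPaper
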